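/- arXiv:2512.00788 — 4 statements merged into one kernel-verified Lean document; each statement's English description precedes it below -/
import Mathlib

section
/- Let ι be a finite type, let h : ι → Matrix n n ℂ be a family of pairwise commuting Hermitian matrices, set H = ∑_a h a, and let A be a matrix such that Commute A (h a) for all a outside a subset T ⊆ ι, with R = ∑_{a ∈ T} ‖h a‖. Let (μ, u) and (ν, v) be eigenpairs of H with real eigenvalues μ, ν (H.mulVec u = (μ:ℂ) • u, H.mulVec v = (ν:ℂ) • v). Then for every real λ ≥ 0, |star u ⬝ᵥ (A.mulVec v)| ≤ Real.exp (-λ * ((μ - ν) - 2 * R)) * ‖A‖ * ‖u‖ * ‖v‖. -/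
open scoped Matrix.Norms.L2Operator
open scoped Matrix

/-!
Conjugation by `exp (λH)` multiplies the matrix element between the eigenvectors `u` and `v` by
exactly `exp (λ(μ - ν))`. The terms of `H` that commute with `A` drop out of this conjugation, so
it equals conjugation by `exp (λH_T)` with `H_T = ∑_{a ∈ T} h a`, which enlarges the norm of `A`
by at most `exp (2λ‖H_T‖) ≤ exp (2λR)`.
-/

open NormedSpace

namespace NormedSpace

variable {𝔸 : Type*} [NormedRing 𝔸] [NormOneClass 𝔸] [NormedAlgebra ℂ 𝔸] [CompleteSpace 𝔸]

theorem norm_exp_le_exp_norm (x : 𝔸) : ‖exp x‖ ≤ Real.exp ‖x‖ := by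
  refine (exp_series_hasSum_exp' (𝕂 := ℂ) x).norm_le_of_bounded
    (Real.exp_eq_exp_ℝ ▸ exp_series_hasSum_exp' (𝕂 := ℝ) ‖x‖) fun k => ?_
  rw [norm_smul, norm_inv, Complex.norm_natCast, smul_eq_mul]
  gcongr
  exact norm_pow_le x k

theorem norm_exp_mul_mul_exp_neg_le (a x : 𝔸) :
    ‖exp a * x * exp (-a)‖ ≤ Real.exp (2 * ‖a‖) * ‖x‖ :=
  calc ‖exp a * x * exp (-a)‖ ≤ ‖exp a‖ * ‖x‖ * ‖exp (-a)‖ := norm_mul₃_le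
    _ ≤ Real.exp ‖a‖ * ‖x‖ * Real.exp ‖a‖ := by
      gcongr
      · exact norm_exp_le_exp_norm a
      · simpa using norm_exp_le_exp_norm (-a)
    _ = Real.exp (2 * ‖a‖) * ‖x‖ := by rw [two_mul, Real.exp_add]; ring

end NormedSpace

namespace Matrix

variable {m n 𝕜 : Type*} [Fintype m] [Fintype n] [DecidableEq n]

theorem exp_add_mul_mul_exp_neg_add {𝔸 : Type*} [NormedRing 𝔸] [NormedAlgebra ℚ 𝔸]
    [CompleteSpace 𝔸]
    {a b x : Matrix n n 𝔸} (hab : Commute a b) (hxb : Commute x b) :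
    exp (a + b) * x * exp (-(a + b)) = exp a * x * exp (-a) := by
  have hcancel : exp b * x * exp (-b) = x := by
    rw [← hxb.exp_right.eq, mul_assoc, ← exp_add_of_commute _ _ (Commute.refl b).neg_right,
      add_neg_cancel, exp_zero, mul_one]
  rw [exp_add_of_commute _ _ hab, neg_add_rev,
    exp_add_of_commute _ _ (hab.symm.neg_left.neg_right)]
  conv_rhs => rw [← hcancel]
  simp only [mul_assoc]

theorem exp_mulVec_of_mulVec_eq_smul [RCLike 𝕜] {M : Matrix n n 𝕜} {c : 𝕜} {u : n → 𝕜}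
    (hu : M *ᵥ u = c • u) : exp M *ᵥ u = exp c • u := by
  have hpow (k : ℕ) : (M ^ k) *ᵥ u = c ^ k • u := by
    induction k with
    | zero => simp
    | succ k ih => rw [pow_succ', ← mulVec_mulVec, ih, mulVec_smul, hu, smul_smul, ← pow_succ]
  let evalAt : Matrix n n 𝕜 →L[𝕜] n → 𝕜 :=
    LinearMap.toContinuousLinearMap
      ((LinearMap.applyₗ u).comp (toLin' : Matrix n n 𝕜 ≃ₗ[𝕜] _).toLinearMap)
  have hM := (exp_series_hasSum_exp' (𝕂 := 𝕜) M).mapL evalAt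
  have hc := (exp_series_hasSum_exp' (𝕂 := 𝕜) c).smul_const u
  simp only [evalAt, LinearMap.coe_toContinuousLinearMap', LinearMap.comp_apply, map_smul,
    LinearMap.applyₗ_apply_apply, LinearEquiv.coe_coe, toLin'_apply, hpow, smul_smul] at hM hc
  exact hM.unique hc

theorem norm_star_dotProduct_mulVec_le [RCLike 𝕜] (B : Matrix m n 𝕜) (u : m → 𝕜) (v : n → 𝕜) :
    ‖star u ⬝ᵥ B *ᵥ v‖ ≤ ‖B‖ * ‖WithLp.toLp 2 u‖ * ‖WithLp.toLp 2 v‖ := by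
  rw [dotProduct_comm, ← EuclideanSpace.inner_toLp_toLp, mul_comm _ ‖WithLp.toLp 2 u‖, mul_assoc]
  exact (norm_inner_le_norm _ _).trans (by gcongr; exact l2_opNorm_mulVec B (WithLp.toLp 2 v))

theorem IsHermitian.star_dotProduct_exp_conj_mulVec {H : Matrix n n ℂ} (hH : H.IsHermitian)
    (A : Matrix n n ℂ) {μ ν : ℝ} {u v : n → ℂ} (hu : H *ᵥ u = (μ : ℂ) • u)
    (hv : H *ᵥ v = (ν : ℂ) • v) (t : ℝ) :
    star u ⬝ᵥ (NormedSpace.exp ((t : ℂ) • H) * A * NormedSpace.exp (-((t : ℂ) • H))) *ᵥ v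
      = Real.exp (t * (μ - ν)) * (star u ⬝ᵥ A *ᵥ v) := by
  have hXu : NormedSpace.exp ((t : ℂ) • H) *ᵥ u = (Real.exp (t * μ) : ℂ) • u := by
    rw [Complex.ofReal_exp, Complex.exp_eq_exp_ℂ]
    refine exp_mulVec_of_mulVec_eq_smul ?_
    rw [smul_mulVec, hu, smul_smul, Complex.ofReal_mul]
  have hYv : NormedSpace.exp (-((t : ℂ) • H)) *ᵥ v = (Real.exp (-(t * ν)) : ℂ) • v := by
    rw [Complex.ofReal_exp, Complex.exp_eq_exp_ℂ]
    refine exp_mulVec_of_mulVec_eq_smul ?_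
    rw [neg_mulVec, smul_mulVec, hv, smul_smul, Complex.ofReal_neg, Complex.ofReal_mul, neg_smul]
  have hX : (NormedSpace.exp ((t : ℂ) • H))ᴴ = NormedSpace.exp ((t : ℂ) • H) :=
    (hH.smul (Complex.conj_ofReal t)).exp
  rw [← mulVec_mulVec, ← mulVec_mulVec, hYv, dotProduct_mulVec, ← hX, ← star_mulVec, hXu,
    mulVec_smul, dotProduct_smul, star_smul, smul_dotProduct, Complex.star_def,
    Complex.conj_ofReal, show t * (μ - ν) = t * μ + -(t * ν) by ring, Real.exp_add]
  simp only [smul_eq_mul, Complex.ofReal_mul]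
  ring

theorem IsHermitian.norm_star_dotProduct_mulVec_le_exp_tilt {H : Matrix n n ℂ}
    (hH : H.IsHermitian) (A : Matrix n n ℂ) {μ ν : ℝ} {u v : n → ℂ} (hu : H *ᵥ u = (μ : ℂ) • u)
    (hv : H *ᵥ v = (ν : ℂ) • v) (t : ℝ) :
    ‖star u ⬝ᵥ A *ᵥ v‖ ≤ Real.exp (-t * (μ - ν))
      * ‖NormedSpace.exp ((t : ℂ) • H) * A * NormedSpace.exp (-((t : ℂ) • H))‖
      * ‖WithLp.toLp 2 u‖ * ‖WithLp.toLp 2 v‖ := by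
  calc ‖star u ⬝ᵥ A *ᵥ v‖
      = Real.exp (-t * (μ - ν)) * ‖star u ⬝ᵥ
          (NormedSpace.exp ((t : ℂ) • H) * A * NormedSpace.exp (-((t : ℂ) • H))) *ᵥ v‖ := by
        rw [hH.star_dotProduct_exp_conj_mulVec A hu hv t, norm_mul, Complex.norm_real,
          Real.norm_of_nonneg (Real.exp_pos _).le, ← mul_assoc, ← Real.exp_add, neg_mul,
          neg_add_cancel, Real.exp_zero, one_mul]
    _ ≤ _ := by
        simp only [mul_assoc]
        gcongr
        simpa only [mul_assoc] using Matrix.norm_star_dotProduct_mulVec_le _ u v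

end Matrix

/-- For a pairwise commuting family of Hermitian matrices `h`
with sum `H`, an operator `A` commuting with all terms outside `T`
(`R = ∑_{a ∈ T} ‖h a‖`), eigenpairs `(μ, u)` and `(ν, v)` of `H`, and any
`λ ≥ 0`, the transition matrix element satisfies
`|⟨u, A v⟩| ≤ e^{-λ((μ-ν) - 2R)} ‖A‖ ‖u‖ ‖v‖` (Euclidean vector norms). -/
theorem transition_element_exponential_decay
    {n : Type*} [Fintype n] [DecidableEq n] [Nonempty n]
    {ι : Type*} [Fintype ι]
    (h : ι → Matrix n n ℂ)
    (hherm : ∀ a, (h a).IsHermitian)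
    (hcomm : ∀ a b, Commute (h a) (h b))
    (H : Matrix n n ℂ) (hH : H = ∑ a, h a)
    (A : Matrix n n ℂ) (T : Finset ι)
    (hA : ∀ a ∉ T, Commute A (h a))
    (R : ℝ) (hR : R = ∑ a ∈ T, ‖h a‖)
    (μ ν : ℝ) (u v : n → ℂ)
    (hu : H.mulVec u = (μ : ℂ) • u) (hv : H.mulVec v = (ν : ℂ) • v)
    (lam : ℝ) (hlam : 0 ≤ lam) :
    ‖star u ⬝ᵥ A.mulVec v‖
      ≤ Real.exp (-lam * ((μ - ν) - 2 * R)) * ‖A‖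
          * ‖(WithLp.equiv 2 (n → ℂ)).symm u‖
          * ‖(WithLp.equiv 2 (n → ℂ)).symm v‖ := by
  classical
  rw [WithLp.equiv_symm_apply]
  set HT := ∑ a ∈ T, h a
  have hHerm : H.IsHermitian :=
    hH ▸ (isSelfAdjoint_sum _ fun a _ => (hherm a).isSelfAdjoint).isHermitian
  have hconj : exp ((lam : ℂ) • H) * A * exp (-((lam : ℂ) • H))
      = exp ((lam : ℂ) • HT) * A * exp (-((lam : ℂ) • HT)) := by
    rw [hH, ← Finset.sum_add_sum_compl T h, smul_add]
    refine Matrix.exp_add_mul_mul_exp_neg_add ?_ ?_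
    · exact ((Commute.sum_left _ _ _ fun a _ =>
        Commute.sum_right _ _ _ fun b _ => hcomm a b).smul_left _).smul_right _
    · exact (Commute.sum_right _ _ _ fun a ha => hA a (Finset.mem_compl.mp ha)).smul_right _
  have hnormHT : ‖(lam : ℂ) • HT‖ ≤ lam * R := by
    rw [norm_smul, Complex.norm_real, Real.norm_of_nonneg hlam, hR]
    gcongr
    exact norm_sum_le _ _
  calc ‖star u ⬝ᵥ A *ᵥ v‖
      ≤ Real.exp (-lam * (μ - ν)) * ‖exp ((lam : ℂ) • H) * A * exp (-((lam : ℂ) • H))‖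
          * ‖WithLp.toLp 2 u‖ * ‖WithLp.toLp 2 v‖ :=
        hHerm.norm_star_dotProduct_mulVec_le_exp_tilt A hu hv lam
    _ ≤ Real.exp (-lam * (μ - ν)) * (Real.exp (2 * (lam * R)) * ‖A‖)
          * ‖WithLp.toLp 2 u‖ * ‖WithLp.toLp 2 v‖ := by
        rw [hconj]
        gcongr
        exact (norm_exp_mul_mul_exp_neg_le _ _).trans (by gcongr)
    _ = _ := by
        rw [← mul_assoc, ← Real.exp_add]
        ring_nf
end

section
/- Let C be a Hermitian matrix in Matrix n n ℂ, let H be any matrix in Matrix n n ℂ, and let Δ ≥ 0. Suppose that for all eigenpairs (μ, u) and (ν, v) of C with real eigenvalues satisfying |μ - ν| > Δ, one has star u ⬝ᵥ (H.mulVec v) = 0. Then ‖⁅C, H⁆‖ ≤ 3 * Δ * ‖H‖. -/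
/-!
Conjugating by the eigenvector unitary of `C` is an isometry that turns `C` into the diagonal
matrix of its eigenvalues `d` and `H` into a matrix `A` with `A i j = 0` whenever
`|d i - d j| > Δ`. Write `d = Δ N + r` with `N = round (d / Δ)` integral and `|r| ≤ Δ / 2`.
Then `‖⁅diagonal r, A⁆‖ ≤ Δ ‖A‖`, while `A` only connects indices with `|N i - N j| ≤ 1`, so
`⁅diagonal N, A⁆` is the difference of the two parts of `A` on which `N i - N j = ± 1`. Each part
has norm at most `‖A‖`: cutting `A` down to the entries with `f i = g j` makes it act on the
orthogonal pieces `{g = k}` of a vector separately, landing in the orthogonal pieces `{f = k}`.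
-/

open scoped Matrix.Norms.L2Operator
open scoped Matrix

theorem norm_lie_le {R : Type*} [NormedRing R] (a b : R) : ‖⁅a, b⁆‖ ≤ 2 * ‖a‖ * ‖b‖ := by
  rw [Ring.lie_def]
  calc ‖a * b - b * a‖ ≤ ‖a‖ * ‖b‖ + ‖b‖ * ‖a‖ :=
        (norm_sub_le _ _).trans (add_le_add (norm_mul_le a b) (norm_mul_le b a))
    _ = 2 * ‖a‖ * ‖b‖ := by ring

theorem Unitary.norm_conjStarAlgAut {S R : Type*} [NormedRing R] [StarRing R] [CStarRing R]
    [SMul S R] [IsScalarTower S R R] [SMulCommClass S R R] (u : unitary R) (x : R) :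
    ‖conjStarAlgAut S R u x‖ = ‖x‖ := by
  rw [conjStarAlgAut_apply, ← Unitary.coe_star, CStarRing.norm_mul_coe_unitary,
    CStarRing.norm_coe_unitary_mul]

section Round

variable {α : Type*} [Field α] [LinearOrder α] [IsStrictOrderedRing α] [FloorRing α]

theorem abs_round_sub_round_le_one {x y : α} (h : |x - y| ≤ 1) : |round x - round y| ≤ 1 := by
  rw [round_eq, round_eq, ← Int.lt_add_one_iff, ← Int.cast_lt (R := α)]
  push_cast
  rw [abs_le] at h
  rw [abs_lt]
  constructor <;> linarith [Int.floor_le (x + 1 / 2), Int.sub_one_lt_floor (x + 1 / 2),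
    Int.floor_le (y + 1 / 2), Int.sub_one_lt_floor (y + 1 / 2)]

theorem abs_sub_mul_round_div_le {x Δ : α} (hΔ : 0 < Δ) : |x - Δ * round (x / Δ)| ≤ Δ / 2 := by
  calc |x - Δ * round (x / Δ)| = Δ * |x / Δ - round (x / Δ)| := by
        rw [← abs_of_pos hΔ, ← abs_mul, abs_of_pos hΔ, mul_sub, mul_div_cancel₀ _ hΔ.ne']
    _ ≤ Δ * (1 / 2) := by gcongr; exact abs_sub_round _
    _ = Δ / 2 := by ring

end Round

namespace Matrix

variable {𝕜 n : Type*} [RCLike 𝕜] [Fintype n] [DecidableEq n]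

theorem lie_diagonal_apply {R : Type*} [CommRing R] (d : n → R) (A : Matrix n n R) (i j : n) :
    ⁅diagonal d, A⁆ i j = (d i - d j) * A i j := by
  rw [Ring.lie_def, sub_apply, diagonal_mul, mul_diagonal]
  ring

theorem IsHermitian.conjStarAlgAut_star_eigenvectorUnitary_apply {C : Matrix n n 𝕜}
    (hC : C.IsHermitian) (H : Matrix n n 𝕜) (i j : n) :
    Unitary.conjStarAlgAut 𝕜 _ (star hC.eigenvectorUnitary) H i j =
      star ⇑(hC.eigenvectorBasis i) ⬝ᵥ H *ᵥ ⇑(hC.eigenvectorBasis j) := by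
  rw [Unitary.conjStarAlgAut_star_apply, dotProduct_mulVec, mul_apply']
  rfl

section Rectangular

variable {m ι : Type*} [Fintype m] [DecidableEq ι]

theorem l2_opNorm_of_ite_eq_le (A : Matrix m n 𝕜) (f : m → ι) (g : n → ι) :
    ‖(of fun i j => if f i = g j then A i j else 0 : Matrix m n 𝕜)‖ ≤ ‖A‖ := by
  set M : Matrix m n 𝕜 := of fun i j => if f i = g j then A i j else 0
  rw [l2_opNorm_def]
  refine ContinuousLinearMap.opNorm_le_bound _ (norm_nonneg _) fun x => ?_
  refine (sq_le_sq₀ (by positivity) (by positivity)).mp ?_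
  let part : ι → EuclideanSpace 𝕜 n := fun k => WithLp.toLp 2 fun j => if g j = k then x j else 0
  have hrow : ∀ i, (M *ᵥ x) i = (A *ᵥ part (f i)) i := fun i => by
    simp only [M, part, mulVec, dotProduct, of_apply, ite_mul, mul_ite, zero_mul, mul_zero]
    exact Finset.sum_congr rfl fun j _ => by simp only [eq_comm]
  have hpart : ∀ k, ∑ i, ‖(A *ᵥ part k) i‖ ^ 2 ≤ ‖A‖ ^ 2 * ‖part k‖ ^ 2 := fun k => by
    rw [← mul_pow]
    calc ∑ i, ‖(A *ᵥ part k) i‖ ^ 2 = ‖(EuclideanSpace.equiv m 𝕜).symm (A *ᵥ part k)‖ ^ 2 := by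
          rw [EuclideanSpace.norm_sq_eq]; rfl
      _ ≤ (‖A‖ * ‖part k‖) ^ 2 := by gcongr; exact l2_opNorm_mulVec A (part k)
  have hsplit : ∑ k ∈ Finset.univ.image f, ‖part k‖ ^ 2 ≤ ‖x‖ ^ 2 := by
    simp only [part, EuclideanSpace.norm_sq_eq, apply_ite, norm_zero, ite_pow,
      zero_pow two_ne_zero]
    rw [Finset.sum_comm]
    refine Finset.sum_le_sum fun j _ => ?_
    rw [Finset.sum_ite_eq]
    split_ifs <;> simp
  calc ‖(toEuclideanLin.trans LinearMap.toContinuousLinearMap M) x‖ ^ 2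
      = ∑ i, ‖(A *ᵥ part (f i)) i‖ ^ 2 := by
        simp [EuclideanSpace.norm_sq_eq, hrow]
    _ = ∑ k ∈ Finset.univ.image f, ∑ i with f i = k, ‖(A *ᵥ part k) i‖ ^ 2 := by
        rw [← Finset.sum_fiberwise_of_maps_to fun i _ =>
          Finset.mem_image_of_mem f (Finset.mem_univ i)]
        refine Finset.sum_congr rfl fun k _ => Finset.sum_congr rfl fun i hi => ?_
        rw [(Finset.mem_filter.mp hi).2]
    _ ≤ ∑ k ∈ Finset.univ.image f, ‖A‖ ^ 2 * ‖part k‖ ^ 2 := by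
        gcongr with k
        exact (Finset.sum_le_sum_of_subset_of_nonneg (Finset.filter_subset _ _)
          fun i _ _ => by positivity).trans (hpart k)
    _ ≤ (‖A‖ * ‖x‖) ^ 2 := by
        rw [← Finset.mul_sum, mul_pow]; gcongr

end Rectangular

theorem l2_opNorm_lie_diagonal_intCast_le_two_mul (N : n → ℤ) (A : Matrix n n 𝕜)
    (hA : ∀ i j, 1 < |N i - N j| → A i j = 0) :
    ‖⁅diagonal fun i => (N i : 𝕜), A⁆‖ ≤ 2 * ‖A‖ := by
  have hsplit : ⁅diagonal fun i => (N i : 𝕜), A⁆ =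
      (of fun i j => if N i = N j + 1 then A i j else 0) -
        of fun i j => if N i + 1 = N j then A i j else 0 := by
    ext i j
    rw [lie_diagonal_apply, sub_apply, of_apply, of_apply, ← Int.cast_sub]
    by_cases hij : 1 < |N i - N j|
    · simp [hA i j hij]
    · obtain ⟨h₁, h₂⟩ := abs_le.mp (not_lt.mp hij)
      have hup : N i = N j + 1 ↔ N i - N j = 1 := by omega
      have hdown : N i + 1 = N j ↔ N i - N j = -1 := by omega
      rcases (by omega : N i - N j = -1 ∨ N i - N j = 0 ∨ N i - N j = 1) with h | h | h <;>
        simp [h, hup, hdown]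
  rw [hsplit, two_mul]
  exact (norm_sub_le _ _).trans
    (add_le_add (l2_opNorm_of_ite_eq_le A N fun j => N j + 1)
      (l2_opNorm_of_ite_eq_le A (fun i => N i + 1) N))

theorem l2_opNorm_lie_diagonal_ofReal_le_three_mul (d : n → ℝ) (A : Matrix n n 𝕜) {Δ : ℝ} (hΔ : 0 ≤ Δ)
    (hA : ∀ i j, Δ < |d i - d j| → A i j = 0) :
    ‖⁅diagonal fun i => (d i : 𝕜), A⁆‖ ≤ 3 * Δ * ‖A‖ := by
  rcases hΔ.eq_or_lt with rfl | hΔ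
  · suffices ⁅diagonal fun i => (d i : 𝕜), A⁆ = 0 by simp [this]
    ext i j
    rw [lie_diagonal_apply, zero_apply]
    rcases eq_or_ne (d i) (d j) with h | h
    · simp [h]
    · simp [hA i j (abs_pos.mpr (sub_ne_zero.mpr h))]
  set N : n → ℤ := fun i => round (d i / Δ)
  set r : n → ℝ := fun i => d i - Δ * N i
  have hN : ∀ i j, 1 < |N i - N j| → A i j = 0 := fun i j h => by
    by_contra hij
    refine h.not_ge (abs_round_sub_round_le_one ?_)
    rw [← sub_div, abs_div, abs_of_pos hΔ, div_le_one hΔ]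
    exact not_lt.mp (mt (hA i j) hij)
  have hr : ‖diagonal fun i => (r i : 𝕜)‖ ≤ Δ / 2 := by
    rw [l2_opNorm_diagonal, pi_norm_le_iff_of_nonneg (by positivity)]
    intro i
    rw [RCLike.norm_ofReal]
    exact abs_sub_mul_round_div_le hΔ
  have hsplit : ⁅diagonal fun i => (d i : 𝕜), A⁆ =
      (Δ : 𝕜) • ⁅diagonal fun i => (N i : 𝕜), A⁆ + ⁅diagonal fun i => (r i : 𝕜), A⁆ := by
    ext i j
    simp only [lie_diagonal_apply, add_apply, smul_apply, smul_eq_mul, r]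
    push_cast
    ring
  rw [hsplit]
  calc ‖(Δ : 𝕜) • ⁅diagonal fun i => (N i : 𝕜), A⁆ + ⁅diagonal fun i => (r i : 𝕜), A⁆‖
      ≤ Δ * (2 * ‖A‖) + 2 * (Δ / 2) * ‖A‖ := by
        refine (norm_add_le _ _).trans (add_le_add ?_ ?_)
        · rw [norm_smul, RCLike.norm_ofReal, abs_of_pos hΔ]
          exact mul_le_mul_of_nonneg_left (l2_opNorm_lie_diagonal_intCast_le_two_mul N A hN) hΔ.le
        · exact (norm_lie_le _ _).trans (by gcongr)
    _ = 3 * Δ * ‖A‖ := by ring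

end Matrix

theorem commutator_bound_of_banded_transitions_general
    {n : Type*} [Fintype n] [DecidableEq n]
    (C H : Matrix n n ℂ) (hC : C.IsHermitian)
    (Δ : ℝ) (hΔ : 0 ≤ Δ)
    (hband : ∀ (μ ν : ℝ) (u v : n → ℂ),
      C.mulVec u = (μ : ℂ) • u → C.mulVec v = (ν : ℂ) • v →
      |μ - ν| > Δ → star u ⬝ᵥ H.mulVec v = 0) :
    ‖⁅C, H⁆‖ ≤ 3 * Δ * ‖H‖ := by
  set Φ := Unitary.conjStarAlgAut ℂ (Matrix n n ℂ) (star hC.eigenvectorUnitary)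
  have heig : ∀ i, C *ᵥ ⇑(hC.eigenvectorBasis i) =
      (hC.eigenvalues i : ℂ) • ⇑(hC.eigenvectorBasis i) :=
    fun i => (hC.mulVec_eigenvectorBasis i).trans (RCLike.real_smul_eq_coe_smul _ _)
  have hΦH : ∀ i j, Δ < |hC.eigenvalues i - hC.eigenvalues j| → Φ H i j = 0 := fun i j h => by
    rw [hC.conjStarAlgAut_star_eigenvectorUnitary_apply]
    exact hband _ _ _ _ (heig i) (heig j) h
  calc ‖⁅C, H⁆‖ = ‖⁅Φ C, Φ H⁆‖ := by
        rw [← Unitary.norm_conjStarAlgAut (S := ℂ) (star hC.eigenvectorUnitary),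
          Ring.lie_def, Ring.lie_def, map_sub, map_mul, map_mul]
    _ ≤ 3 * Δ * ‖Φ H‖ := by
        rw [hC.conjStarAlgAut_star_eigenvectorUnitary]
        exact Matrix.l2_opNorm_lie_diagonal_ofReal_le_three_mul _ _ hΔ hΦH
    _ = 3 * Δ * ‖H‖ := by rw [Unitary.norm_conjStarAlgAut]

/-- If, in the eigenbasis of a Hermitian matrix `C`, the operator
`H` only connects eigenspaces whose (real) eigenvalues differ by at most `Δ`,
then `‖⁅C, H⁆‖ ≤ 3 Δ ‖H‖`. -/
theorem commutator_bound_of_banded_transitions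
    {n : Type*} [Fintype n] [DecidableEq n] [Nonempty n]
    (C H : Matrix n n ℂ) (hC : C.IsHermitian)
    (Δ : ℝ) (hΔ : 0 ≤ Δ)
    (hband : ∀ (μ ν : ℝ) (u v : n → ℂ),
      C.mulVec u = (μ : ℂ) • u → C.mulVec v = (ν : ℂ) • v →
      |μ - ν| > Δ → star u ⬝ᵥ H.mulVec v = 0) :
    ‖⁅C, H⁆‖ ≤ 3 * Δ * ‖H‖ :=
  commutator_bound_of_banded_transitions_general C H hC Δ hΔ hband
end

section
/- Fix N ≥ 3. Let H_B = ∑_{i=1}^N σx^{(0)} * σx^{(i)} + ∑_{i=1}^N σz^{(i)} * σz^{(i⊕1)} (MCS battery) and H_C = ∑_{i=1}^N σy^{(0)} * σx^{(i)} + ∑_{i=1}^N σz^{(i)} * σz^{(i⊕1)} (MCS charger), where i⊕1 denotes the cyclic successor on the peripheral sites {1,…,N}. Then ⁅H_B, H_C⁆ = (2 * Complex.I) • (σz^{(0)} * (∑_{i=1}^N σx^{(i)})^2) - (2 * Complex.I) • (σx^{(0)} * ∑_{i=1}^N (σy^{(i)} * σz^{(i⊕1)} + σz^{(i⊖1)}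 * σy^{(i)})) + (2 * Complex.I) • (σy^{(0)} * ∑_{i=1}^N (σy^{(i)} * σz^{(i⊕1)} + σz^{(i)} * σy^{(i⊕1)})), where i⊖1 is the cyclic predecessor on {1,…,N}. -/
/-!
Operators on distinct sites commute, and `siteOp · j` is linear and multiplicative, so every
bracket in `⁅H_B, H_C⁆` reduces to a single-site Pauli commutator. Writing `S = ∑ᵢ σx⁽ⁱ⁾`, the
central terms `σx⁽⁰⁾ S` and `σy⁽⁰⁾ S` give `⁅σx, σy⁆⁽⁰⁾ S² = 2i σz⁽⁰⁾ S²`. Against the Ising ring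
the central factor commutes out and the Leibniz rule gives
`⁅S, σz⁽ⁱ⁾ σz⁽ⁱ⊕¹⁾⁆ = -2i (σy⁽ⁱ⁾ σz⁽ⁱ⊕¹⁾ + σz⁽ⁱ⁾ σy⁽ⁱ⊕¹⁾)`, the ring commutes with itself, and
the sum over `σz⁽ⁱ⊖¹⁾ σy⁽ⁱ⁾` is the sum over `σz⁽ⁱ⁾ σy⁽ⁱ⊕¹⁾` reindexed by the cyclic rotation.
-/

open scoped Matrix.Norms.L2Operator
open scoped Matrix

/-- The 2×2 matrix `P` acting on site `j` of a chain of `N+1` qubits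
(identity elsewhere): `P⁽ʲ⁾ f g = P (f j) (g j) * ∏_{k ≠ j} δ_{f k, g k}`. -/
def siteOp {N : ℕ} (P : Matrix (Fin 2) (Fin 2) ℂ) (j : Fin (N + 1)) :
    Matrix (Fin (N + 1) → Fin 2) (Fin (N + 1) → Fin 2) ℂ :=
  fun f g => P (f j) (g j) * ∏ k ∈ Finset.univ.erase j, (if f k = g k then (1 : ℂ) else 0)

/-- Pauli X. -/
def σx : Matrix (Fin 2) (Fin 2) ℂ := !![0, 1; 1, 0]
/-- Pauli Y. -/
def σy : Matrix (Fin 2) (Fin 2) ℂ := !![0, -Complex.I; Complex.I, 0]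
/-- Pauli Z. -/
def σz : Matrix (Fin 2) (Fin 2) ℂ := !![1, 0; 0, -1]

/-- The peripheral site labelled `i+1` (site `0` is the central spin). -/
def per {N : ℕ} (i : Fin N) : Fin (N + 1) := i.succ

/-- The cyclic successor `i ⊕ 1` among the peripheral sites `{1, …, N}`. -/
def perS {N : ℕ} (i : Fin N) : Fin (N + 1) :=
  ⟨(i.1 + 1) % N + 1, Nat.succ_lt_succ (Nat.mod_lt _ i.pos)⟩
/-- The cyclic predecessor `i ⊖ 1` among the peripheral sites `{1, …, N}`. -/
def perP {N : ℕ} (i : Fin N) : Fin (N + 1) :=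
  ⟨(i.1 + (N - 1)) % N + 1, Nat.succ_lt_succ (Nat.mod_lt _ i.pos)⟩

/-- The modified central-spin (MCS) battery Hamiltonian
`H_B = ∑_{i=1}^N σx⁽⁰⁾ σx⁽ⁱ⁾ + ∑_{i=1}^N σz⁽ⁱ⁾ σz⁽ⁱ⊕¹⁾` on `N+1` qubits (PBC). -/
noncomputable def HB (N : ℕ) :
    Matrix (Fin (N + 1) → Fin 2) (Fin (N + 1) → Fin 2) ℂ :=
  (∑ i : Fin N, siteOp σx 0 * siteOp σx (per i)) +
  (∑ i : Fin N, siteOp σz (per i) * siteOp σz (perS i))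

/-- The modified central-spin (MCS) charger Hamiltonian
`H_C = ∑_{i=1}^N σy⁽⁰⁾ σx⁽ⁱ⁾ + ∑_{i=1}^N σz⁽ⁱ⁾ σz⁽ⁱ⊕¹⁾` on `N+1` qubits (PBC). -/
noncomputable def HC (N : ℕ) :
    Matrix (Fin (N + 1) → Fin 2) (Fin (N + 1) → Fin 2) ℂ :=
  (∑ i : Fin N, siteOp σy 0 * siteOp σx (per i)) +
  (∑ i : Fin N, siteOp σz (per i) * siteOp σz (perS i))

open Finset

section Commutator

variable {A : Type*} [Ring A]

lemma lie_add_add_right (a b c : A) : ⁅a + c, b + c⁆ = ⁅a, b⁆ + ⁅a, c⁆ - ⁅b, c⁆ := by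
  simp only [Ring.lie_def]
  noncomm_ring

lemma lie_mul_of_commute_left {a b c : A} (h : Commute a c) : ⁅a * b, c⁆ = a * ⁅b, c⁆ := by
  rw [Ring.lie_def, Ring.lie_def, mul_sub, mul_assoc, ← mul_assoc c, ← h.eq, mul_assoc]

lemma lie_mul (a b c : A) : ⁅a, b * c⁆ = ⁅a, b⁆ * c + b * ⁅a, c⁆ := by
  simp only [Ring.lie_def]
  noncomm_ring

lemma lie_mul_mul_of_commute {a b s : A} (ha : Commute a s) (hb : Commute b s) :
    ⁅a * s, b * s⁆ = ⁅a, b⁆ * s ^ 2 := by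
  rw [Ring.lie_def, Ring.lie_def, hb.symm.mul_mul_mul_comm, ha.symm.mul_mul_mul_comm, sq,
    sub_mul]

end Commutator

section SiteOp

variable {N : ℕ}

lemma siteOp_smul (c : ℂ) (P : Matrix (Fin 2) (Fin 2) ℂ) (j : Fin (N + 1)) :
    siteOp (c • P) j = c • siteOp P j := by
  ext f g
  simp [siteOp, mul_assoc]

lemma siteOp_sub (P Q : Matrix (Fin 2) (Fin 2) ℂ) (j : Fin (N + 1)) :
    siteOp (P - Q) j = siteOp P j - siteOp Q j := by
  ext f g
  simp [siteOp, sub_mul]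

lemma siteOp_apply_of_ne (P : Matrix (Fin 2) (Fin 2) ℂ) {j k : Fin (N + 1)} (hkj : k ≠ j)
    {f g : Fin (N + 1) → Fin 2} (hfg : f k ≠ g k) : siteOp P j f g = 0 :=
  mul_eq_zero_of_right _ (prod_eq_zero (mem_erase.2 ⟨hkj, mem_univ k⟩) (if_neg hfg))

lemma siteOp_update_apply (P : Matrix (Fin 2) (Fin 2) ℂ) (j : Fin (N + 1))
    (f g : Fin (N + 1) → Fin 2) (b : Fin 2) :
    siteOp P j (Function.update f j b) g
      = P b (g j) * ∏ k ∈ univ.erase j, if f k = g k then (1 : ℂ) else 0 := by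
  simp only [siteOp, Function.update_self]
  congr 1
  refine prod_congr rfl fun k hk => ?_
  rw [Function.update_of_ne (ne_of_mem_erase hk)]

lemma siteOp_apply_update (P : Matrix (Fin 2) (Fin 2) ℂ) (j : Fin (N + 1))
    (f : Fin (N + 1) → Fin 2) (b : Fin 2) :
    siteOp P j f (Function.update f j b) = P (f j) b := by
  simp only [siteOp, Function.update_self]
  rw [prod_eq_one fun k hk => by rw [Function.update_of_ne (ne_of_mem_erase hk), if_pos rfl],
    mul_one]

lemma siteOp_mul_apply (P : Matrix (Fin 2) (Fin 2) ℂ) (j : Fin (N + 1))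
    (M : Matrix (Fin (N + 1) → Fin 2) (Fin (N + 1) → Fin 2) ℂ) (f g : Fin (N + 1) → Fin 2) :
    (siteOp P j * M) f g = ∑ b, P (f j) b * M (Function.update f j b) g := by
  have hzero : ∀ h ∉ univ.image (Function.update f j), siteOp P j f h * M h g = 0 := by
    intro h hh
    obtain ⟨k, hkj, hk⟩ : ∃ k ≠ j, f k ≠ h k := by
      by_contra! hall
      refine hh (mem_image.2 ⟨h j, mem_univ _, funext fun k => ?_⟩)
      by_cases hkj : k = j
      · subst hkj; simp
      · rw [Function.update_of_ne hkj, hall k hkj]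
    rw [siteOp_apply_of_ne P hkj hk, zero_mul]
  rw [Matrix.mul_apply, ← sum_subset (subset_univ _) fun h _ hh => hzero h hh,
    sum_image fun _ _ _ _ h => Function.update_injective f j h]
  simp only [siteOp_apply_update]

lemma siteOp_mul_siteOp_self (P Q : Matrix (Fin 2) (Fin 2) ℂ) (j : Fin (N + 1)) :
    siteOp P j * siteOp Q j = siteOp (P * Q) j := by
  ext f g
  simp only [siteOp_mul_apply, siteOp_update_apply, ← mul_assoc, ← sum_mul]
  rfl

lemma siteOp_mul_siteOp_apply_of_ne (P Q : Matrix (Fin 2) (Fin 2) ℂ) {j k : Fin (N + 1)}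
    (hjk : j ≠ k) (f g : Fin (N + 1) → Fin 2) :
    (siteOp P j * siteOp Q k) f g
      = P (f j) (g j) * Q (f k) (g k) *
          ∏ l ∈ (univ.erase j).erase k, if f l = g l then (1 : ℂ) else 0 := by
  have hsplit : ∀ b, siteOp Q k (Function.update f j b) g
      = Q (f k) (g k) * ((if b = g j then 1 else 0) *
          ∏ l ∈ (univ.erase j).erase k, if f l = g l then (1 : ℂ) else 0) := by
    intro b
    simp only [siteOp, Function.update_of_ne hjk.symm]
    rw [← mul_prod_erase _ _ (mem_erase.2 ⟨hjk, mem_univ j⟩), Function.update_self,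
      erase_right_comm]
    congr 2
    refine prod_congr rfl fun l hl => ?_
    rw [Function.update_of_ne (ne_of_mem_erase (mem_of_mem_erase hl))]
  simp only [siteOp_mul_apply, hsplit, mul_ite, mul_zero, ite_mul, zero_mul,
    sum_ite_eq', mem_univ, if_true]
  ring

lemma commute_siteOp_of_ne (P Q : Matrix (Fin 2) (Fin 2) ℂ) {j k : Fin (N + 1)} (hjk : j ≠ k) :
    Commute (siteOp P j) (siteOp Q k) := by
  ext f g
  rw [siteOp_mul_siteOp_apply_of_ne P Q hjk, siteOp_mul_siteOp_apply_of_ne Q P hjk.symm,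
    erase_right_comm]
  ring

lemma lie_siteOp_siteOp (P Q : Matrix (Fin 2) (Fin 2) ℂ) (j k : Fin (N + 1)) :
    ⁅siteOp P j, siteOp Q k⁆ = if j = k then siteOp ⁅P, Q⁆ j else 0 := by
  split_ifs with hjk
  · rw [hjk, Ring.lie_def, Ring.lie_def, siteOp_mul_siteOp_self, siteOp_mul_siteOp_self,
      siteOp_sub]
  · exact commute_iff_lie_eq.1 (commute_siteOp_of_ne P Q hjk)

end SiteOp

lemma lie_σx_σy : ⁅σx, σy⁆ = (2 * Complex.I) • σz := by
  ext i j
  fin_cases i <;> fin_cases j <;>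
    simp [Ring.lie_def, σx, σy, σz] <;> ring

lemma lie_σx_σz : ⁅σx, σz⁆ = -(2 * Complex.I) • σy := by
  ext i j
  fin_cases i <;> fin_cases j <;>
    simp [Ring.lie_def, σx, σy, σz] <;> ring_nf <;> simp [Complex.I_sq]

section Peripheral

variable {N : ℕ}

lemma per_ne_zero (i : Fin N) : per i ≠ 0 := Fin.succ_ne_zero i

lemma per_injective : Function.Injective (per (N := N)) := Fin.succ_injective N

lemma per_finRotate (i : Fin N) : per (finRotate N i) = perS i := by
  obtain ⟨n, rfl⟩ : ∃ n, N = n + 1 := Nat.exists_eq_add_one.2 i.pos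
  simp [per, perS, finRotate_apply, Fin.ext_iff, Fin.val_add]

lemma perP_finRotate (i : Fin N) : perP (finRotate N i) = per i := by
  obtain ⟨n, rfl⟩ : ∃ n, N = n + 1 := Nat.exists_eq_add_one.2 i.pos
  simp only [per, perP, finRotate_apply, Fin.ext_iff, Fin.val_succ, Fin.val_add, Fin.val_one',
    Nat.add_mod_mod, Nat.mod_add_mod, add_tsub_cancel_right, Nat.add_right_cancel_iff]
  rw [add_assoc, add_comm 1 n, Nat.add_mod_right, Nat.mod_eq_of_lt i.2]

lemma perS_ne_zero (i : Fin N) : perS i ≠ 0 := per_finRotate i ▸ per_ne_zero _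

end Peripheral

section MCS

attribute [local instance] LieRing.ofAssociativeRing

def peripheralX (N : ℕ) : Matrix (Fin (N + 1) → Fin 2) (Fin (N + 1) → Fin 2) ℂ :=
  ∑ i : Fin N, siteOp σx (per i)

def ringZZ (N : ℕ) : Matrix (Fin (N + 1) → Fin 2) (Fin (N + 1) → Fin 2) ℂ :=
  ∑ i : Fin N, siteOp σz (per i) * siteOp σz (perS i)

def ringYZ (N : ℕ) : Matrix (Fin (N + 1) → Fin 2) (Fin (N + 1) → Fin 2) ℂ :=
  ∑ i : Fin N, (siteOp σy (per i) * siteOp σz (perS i) + siteOp σz (per i) * siteOp σy (perS i))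

variable {N : ℕ}

lemma HB_eq : HB N = siteOp σx 0 * peripheralX N + ringZZ N := by
  rw [HB, peripheralX, mul_sum, ringZZ]

lemma HC_eq : HC N = siteOp σy 0 * peripheralX N + ringZZ N := by
  rw [HC, peripheralX, mul_sum, ringZZ]

lemma commute_siteOp_zero_peripheralX (P : Matrix (Fin 2) (Fin 2) ℂ) :
    Commute (siteOp P 0) (peripheralX N) :=
  .sum_right _ _ _ fun i _ => commute_siteOp_of_ne _ _ (per_ne_zero i).symm

lemma lie_peripheralX_siteOp_σz (j : Fin N) :
    ⁅peripheralX N, siteOp σz (per j)⁆ = -(2 * Complex.I) • siteOp σy (per j) := by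
  simp only [peripheralX, sum_lie, lie_siteOp_siteOp, per_injective.eq_iff, sum_ite_eq',
    mem_univ, if_true, lie_σx_σz, siteOp_smul]

lemma lie_siteOp_zero_mul_peripheralX_ringZZ (P : Matrix (Fin 2) (Fin 2) ℂ) :
    ⁅siteOp P 0 * peripheralX N, ringZZ N⁆ = -(2 * Complex.I) • (siteOp P 0 * ringYZ N) := by
  have hcomm : Commute (siteOp P 0) (ringZZ N) := .sum_right _ _ _ fun j _ =>
    (commute_siteOp_of_ne _ _ (per_ne_zero j).symm).mul_right
      (commute_siteOp_of_ne _ _ (perS_ne_zero j).symm)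
  rw [lie_mul_of_commute_left hcomm, ringZZ, ringYZ, lie_sum]
  simp only [← per_finRotate, lie_mul, lie_peripheralX_siteOp_σz, smul_mul_assoc,
    mul_smul_comm, ← smul_add, ← smul_sum]

lemma sum_σz_perP_mul_σy_per :
    ∑ i : Fin N, siteOp σz (perP i) * siteOp σy (per i)
      = ∑ i : Fin N, siteOp σz (per i) * siteOp σy (perS i) := by
  rw [← Equiv.sum_comp (finRotate N)]
  simp only [perP_finRotate, per_finRotate]

end MCS

theorem mcs_commutator_formula_general (N : ℕ) :
    ⁅HB N, HC N⁆
      = (2 * Complex.I) • (siteOp σz 0 * (∑ i : Fin N, siteOp σx (per i)) ^ 2)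
        - (2 * Complex.I) •
            (siteOp σx 0 *
              ∑ i : Fin N,
                (siteOp σy (per i) * siteOp σz (perS i) +
                 siteOp σz (perP i) * siteOp σy (per i)))
        + (2 * Complex.I) •
            (siteOp σy 0 *
              ∑ i : Fin N,
                (siteOp σy (per i) * siteOp σz (perS i) +
                 siteOp σz (per i) * siteOp σy (perS i))) := by
  have hYZ : ∑ i : Fin N, (siteOp σy (per i) * siteOp σz (perS i) +
      siteOp σz (perP i) * siteOp σy (per i)) = ringYZ N := by
    rw [sum_add_distrib, sum_σz_perP_mul_σy_per, ← sum_add_distrib, ringYZ]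
  rw [hYZ, ← ringYZ, ← peripheralX, HB_eq, HC_eq, lie_add_add_right,
    lie_mul_mul_of_commute (commute_siteOp_zero_peripheralX σx)
      (commute_siteOp_zero_peripheralX σy),
    lie_siteOp_siteOp, if_pos rfl, lie_σx_σy, siteOp_smul,
    lie_siteOp_zero_mul_peripheralX_ringZZ, lie_siteOp_zero_mul_peripheralX_ringZZ, smul_mul_assoc]
  module

/-- Exact form of the commutator of the MCS battery and charger
Hamiltonians:
`⁅H_B, H_C⁆ = 2i σz⁽⁰⁾ (∑ᵢ σx⁽ⁱ⁾)² − 2i σx⁽⁰⁾ ∑ᵢ (σy⁽ⁱ⁾σz⁽ⁱ⊕¹⁾ + σz⁽ⁱ⊖¹⁾σy⁽ⁱ⁾)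
  + 2i σy⁽⁰⁾ ∑ᵢ (σy⁽ⁱ⁾σz⁽ⁱ⊕¹⁾ + σz⁽ⁱ⁾σy⁽ⁱ⊕¹⁾)`. -/
theorem mcs_commutator_formula (N : ℕ) (hN : 3 ≤ N) :
    ⁅HB N, HC N⁆
      = (2 * Complex.I) • (siteOp σz 0 * (∑ i : Fin N, siteOp σx (per i)) ^ 2)
        - (2 * Complex.I) •
            (siteOp σx 0 *
              ∑ i : Fin N,
                (siteOp σy (per i) * siteOp σz (perS i) +
                 siteOp σz (perP i) * siteOp σy (per i)))
        + (2 * Complex.I) •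
            (siteOp σy 0 *
              ∑ i : Fin N,
                (siteOp σy (per i) * siteOp σz (perS i) +
                 siteOp σz (per i) * siteOp σy (perS i))) :=
  mcs_commutator_formula_general N
end

section
/- Fix N ≥ 1. Then the ℓ²→ℓ² operator norm of σz^{(0)} * (∑_{i=1}^N σx^{(i)})^2 on N+1 qubits equals N^2. Consequently ‖(2 * Complex.I) • (σz^{(0)} * (∑_{i=1}^N σx^{(i)})^2)‖ = 2 * N^2, so the dominant term of the MCS commutator scales quadratically with system size. -/
open scoped Matrix.Norms.L2Operator
open scoped Matrix

/-!
Each `P⁽ʲ⁾` is, after splitting off site `j`, the Kronecker product `P ⊗ 1`; hence it is unitary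
when `P` is. Left multiplication by the unitary `σz⁽⁰⁾` preserves the operator norm, and the
triangle inequality bounds `‖∑ᵢ σx⁽ⁱ⁾‖` by `N`. Conversely, every `σx⁽ⁱ⁾` fixes the all-ones
vector, which is therefore an eigenvector of `(∑ᵢ σx⁽ⁱ⁾)²` with eigenvalue `N²`.
-/

open scoped Kronecker

namespace Matrix

theorem pow_mulVec_of_mulVec_eq_smul {n R : Type*} [Fintype n] [DecidableEq n] [CommSemiring R]
    {A : Matrix n n R} {v : n → R} {c : R} (hAv : A *ᵥ v = c • v) (k : ℕ) :
    A ^ k *ᵥ v = c ^ k • v := by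
  induction k with
  | zero => simp
  | succ k ih => rw [pow_succ, ← mulVec_mulVec, hAv, mulVec_smul, ih, smul_smul, pow_succ']

theorem reindex_mem_unitary {m n R : Type*} [Fintype m] [DecidableEq m] [Fintype n]
    [DecidableEq n] [Semiring R] [StarRing R] (e : m ≃ n) {U : Matrix m m R}
    (hU : U ∈ unitary (Matrix m m R)) : reindex e e U ∈ unitary (Matrix n n R) := by
  rw [Unitary.mem_iff, star_eq_conjTranspose] at hU ⊢
  simp only [reindex_apply, conjTranspose_submatrix, submatrix_mul_equiv, hU.1, hU.2,
    submatrix_one_equiv, and_self]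

theorem norm_le_l2_opNorm_of_mulVec_eq_smul {n 𝕜 : Type*} [RCLike 𝕜] [Fintype n] [DecidableEq n]
    {A : Matrix n n 𝕜} {v : n → 𝕜} {c : 𝕜} (hv : v ≠ 0) (hAv : A *ᵥ v = c • v) : ‖c‖ ≤ ‖A‖ := by
  have hpos : 0 < ‖(EuclideanSpace.equiv n 𝕜).symm v‖ := by simpa using hv
  have h := A.l2_opNorm_mulVec ((EuclideanSpace.equiv n 𝕜).symm v)
  rw [show A *ᵥ (EuclideanSpace.equiv n 𝕜).symm v = c • v from hAv, map_smul, norm_smul] at h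
  exact le_of_mul_le_mul_right h hpos

end Matrix

open Matrix

theorem σx_mem_unitary : σx ∈ unitary (Matrix (Fin 2) (Fin 2) ℂ) := by
  rw [Unitary.mem_iff, star_eq_conjTranspose]
  constructor <;> ext i j <;> fin_cases i <;> fin_cases j <;> simp [σx, mul_apply]

theorem σz_mem_unitary : σz ∈ unitary (Matrix (Fin 2) (Fin 2) ℂ) := by
  rw [Unitary.mem_iff, star_eq_conjTranspose]
  constructor <;> ext i j <;> fin_cases i <;> fin_cases j <;> simp [σz, mul_apply]

theorem σx_mulVec_one : σx *ᵥ 1 = 1 := by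
  ext i
  fin_cases i <;> simp [σx, mulVec, dotProduct]

section SiteOperators

variable {N : ℕ}

theorem siteOp_eq_reindex_kronecker (P : Matrix (Fin 2) (Fin 2) ℂ) (j : Fin (N + 1)) :
    siteOp P j = reindex (Equiv.funSplitAt j (Fin 2)).symm (Equiv.funSplitAt j (Fin 2)).symm
      (P ⊗ₖ 1) := by
  ext f g
  simp [siteOp, kroneckerMap_apply, Finset.prod_boole, one_apply, funext_iff]

theorem siteOp_mem_unitary {P : Matrix (Fin 2) (Fin 2) ℂ} (hP : P ∈ unitary _) (j : Fin (N + 1)) :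
    siteOp P j ∈ unitary _ := by
  rw [siteOp_eq_reindex_kronecker]
  exact reindex_mem_unitary _ (kronecker_mem_unitary hP (one_mem _))

theorem siteOp_mulVec_one (P : Matrix (Fin 2) (Fin 2) ℂ) (j : Fin (N + 1)) :
    siteOp P j *ᵥ 1 = fun f => (P *ᵥ 1) (f j) := by
  ext f
  rw [siteOp_eq_reindex_kronecker, reindex_apply, submatrix_mulVec_equiv]
  simp [mulVec, dotProduct, kroneckerMap_apply, one_apply, Fintype.sum_prod_type]

variable {ι : Type*} [Fintype ι] {P : Matrix (Fin 2) (Fin 2) ℂ} (s : ι → Fin (N + 1))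

theorem sum_siteOp_mulVec_one (hP : P *ᵥ 1 = 1) :
    (∑ i, siteOp P (s i)) *ᵥ 1 = (Fintype.card ι : ℂ) • 1 := by
  ext f
  simp [sum_mulVec, siteOp_mulVec_one, hP]

theorem norm_sum_siteOp_le (hP : P ∈ unitary _) : ‖∑ i, siteOp P (s i)‖ ≤ Fintype.card ι := by
  refine (norm_sum_le _ _).trans ?_
  simp [CStarRing.norm_of_mem_unitary (siteOp_mem_unitary hP _)]

theorem norm_sum_siteOp_pow (hP : P ∈ unitary _) (hP1 : P *ᵥ 1 = 1) (k : ℕ) :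
    ‖(∑ i, siteOp P (s i)) ^ k‖ = (Fintype.card ι : ℝ) ^ k := by
  refine le_antisymm ((norm_pow_le _ k).trans (by gcongr; exact norm_sum_siteOp_le s hP)) ?_
  simpa using norm_le_l2_opNorm_of_mulVec_eq_smul one_ne_zero
    (pow_mulVec_of_mulVec_eq_smul (sum_siteOp_mulVec_one s hP1) k)

end SiteOperators

theorem dominant_term_norm_general (N : ℕ) :
    ‖siteOp σz 0 * (∑ i : Fin N, siteOp σx (per i)) ^ 2‖ = (N : ℝ) ^ 2 ∧
    ‖(2 * Complex.I) • (siteOp σz 0 * (∑ i : Fin N, siteOp σx (per i)) ^ 2)‖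
      = 2 * (N : ℝ) ^ 2 := by
  have hnorm : ‖siteOp σz 0 * (∑ i : Fin N, siteOp σx (per i)) ^ 2‖ = (N : ℝ) ^ 2 := by
    rw [CStarRing.norm_mem_unitary_mul _ (siteOp_mem_unitary σz_mem_unitary 0),
      norm_sum_siteOp_pow per σx_mem_unitary σx_mulVec_one, Fintype.card_fin]
  refine ⟨hnorm, ?_⟩
  rw [norm_smul, hnorm]
  simp

/-- The ℓ²→ℓ² operator norm of `σz⁽⁰⁾ (∑_{i=1}^N σx⁽ⁱ⁾)²` on
`N+1` qubits equals `N²`, and consequently the dominant term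
`2i σz⁽⁰⁾ (∑ᵢ σx⁽ⁱ⁾)²` of the MCS commutator has norm `2 N²`. -/
theorem dominant_term_norm (N : ℕ) (hN : 1 ≤ N) :
    ‖siteOp σz 0 * (∑ i : Fin N, siteOp σx (per i)) ^ 2‖ = (N : ℝ) ^ 2 ∧
    ‖(2 * Complex.I) • (siteOp σz 0 * (∑ i : Fin N, siteOp σx (per i)) ^ 2)‖
      = 2 * (N : ℝ) ^ 2 :=
  dominant_term_norm_general N
end
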